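/- Let d ≥ 2 be an integer and n > d/2 a real number. Then Σ_n := (2π)^{−d} ∑_{h∈ℤ^d} (1+|h|²)^{−n} is finite, and for every real cutoff λ ≥ 2√d one has 𝒮_n(λ) < Σ_n ≤ 𝒮_n(λ) + δ𝒮_n(λ), where 𝒮_n(λ) := (2π)^{−d} ∑_{h∈ℤ^d, |h|<λ} (1+|h|²)^{−n} and δ𝒮_n(λ) := (1+d)^n / (2^{d−1} π^{d/2} Γ(d/2) (2n−d) (λ−√d)^{2n−d}). -/

import Mathlib

/-!
Compare each lattice point `h` with `|h| ≥ λ` to the unit cube `h + [0,1)^d`. A point `y` of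
that cube satisfies `|y| ≥ λ - √d` and `|y|² ≤ (1 + d)(1 + |h|²)`, so
`(1 + |h|²)^{-n} ≤ (1 + d)^n ∫_{h + [0,1)^d} |y|^{-2n} dy`. The cubes are disjoint, hence the tail
of the series is at most `(1 + d)^n ∫_{|y| ≥ λ - √d} |y|^{-2n} dy`, which polar coordinates evaluate
to `(1 + d)^n · (2π^{d/2} / Γ(d/2)) · (λ - √d)^{d-2n} / (2n - d) = (2π)^d δ𝒮_n(λ)`. The lattice
points with `|h| < λ` are finitely many, so the series converges, and its tail is positive.
-/

open Set

/-- The Euclidean norm of a lattice point `h ∈ ℤ^d`. -/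
noncomputable def znorm {d : ℕ} (h : Fin d → ℤ) : ℝ :=
  Real.sqrt (∑ i, ((h i : ℝ)) ^ 2)

open MeasureTheory Module Submodule Metric Real
open scoped ENNReal RealInnerProductSpace

theorem MeasureTheory.IsAddFundamentalDomain.tsum_mul_measure_le_lintegral
    {G α : Type*} [AddGroup G] [AddAction G α] [MeasurableSpace α] {μ : Measure α}
    [Countable G] [MeasurableConstVAdd G α] [VAddInvariantMeasure G α μ] {s : Set α}
    (hs : IsAddFundamentalDomain G s μ) {f : G → ℝ≥0∞} {F : α → ℝ≥0∞}
    (hfF : ∀ g, ∀ x ∈ s, f g ≤ F (g +ᵥ x)) :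
    (∑' g, f g) * μ s ≤ ∫⁻ x, F x ∂μ := by
  rw [hs.lintegral_eq_tsum'' F, ← ENNReal.tsum_mul_right]
  refine ENNReal.tsum_le_tsum fun g => ?_
  rw [← setLIntegral_const]
  exact lintegral_mono_ae ((ae_restrict_mem₀ hs.nullMeasurableSet).mono (hfF g))

section RadialTail

variable {E : Type*} [NormedAddCommGroup E] [NormedSpace ℝ E] [FiniteDimensional ℝ E]
  [MeasurableSpace E] [BorelSpace E] [Nontrivial E] (μ : Measure E) [μ.IsAddHaarMeasure]
  {R s : ℝ}

theorem pow_smul_indicator_Ici_rpow (hR : 0 < R) (k : ℕ) :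
    (fun y : ℝ => y ^ k • (Ici R).indicator (fun r => r ^ (-s)) y) =
      (Ici R).indicator (fun y => y ^ ((k : ℝ) - s)) := by
  ext y
  by_cases hy : y ∈ Ici R
  · rw [indicator_of_mem hy, indicator_of_mem hy, smul_eq_mul, ← rpow_natCast,
      ← rpow_add (hR.trans_le hy), sub_eq_add_neg]
  · rw [indicator_of_notMem hy, indicator_of_notMem hy, smul_zero]

theorem integrable_indicator_Ici_rpow_norm (hR : 0 < R) (hs : (finrank ℝ E : ℝ) < s) :
    Integrable (fun x : E => (Ici R).indicator (fun r => r ^ (-s)) ‖x‖) μ := by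
  rw [integrable_fun_norm_addHaar μ, pow_smul_indicator_Ici_rpow hR]
  have hR' : IntegrableOn (fun y : ℝ => y ^ (((finrank ℝ E - 1 : ℕ) : ℝ) - s)) (Ici R) :=
    (integrableOn_Ici_iff_integrableOn_Ioi).mpr <| integrableOn_Ioi_rpow_of_lt (by
      rw [Nat.cast_sub finrank_pos]; push_cast; linarith) hR
  exact (hR'.integrable_indicator measurableSet_Ici).integrableOn

theorem integral_indicator_Ici_rpow_norm (hR : 0 < R) (hs : (finrank ℝ E : ℝ) < s) :
    ∫ x : E, (Ici R).indicator (fun r => r ^ (-s)) ‖x‖ ∂μ =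
      finrank ℝ E * μ.real (ball 0 1) * (R ^ ((finrank ℝ E : ℝ) - s) / (s - finrank ℝ E)) := by
  have hexp : ((finrank ℝ E - 1 : ℕ) : ℝ) - s + 1 = finrank ℝ E - s := by
    rw [Nat.cast_sub finrank_pos]; push_cast; ring
  rw [integral_fun_norm_addHaar μ, pow_smul_indicator_Ici_rpow hR, setIntegral_indicator
    measurableSet_Ici, inter_eq_right.mpr (Ici_subset_Ioi.mpr hR),
    integral_Ici_eq_integral_Ioi, integral_Ioi_rpow_of_lt (by linarith) hR, hexp,
    nsmul_eq_mul, smul_eq_mul, mul_assoc, neg_div, ← div_neg, neg_sub]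

theorem lintegral_ofReal_indicator_Ici_rpow_norm (hR : 0 < R) (hs : (finrank ℝ E : ℝ) < s) :
    ∫⁻ x : E, ENNReal.ofReal ((Ici R).indicator (fun r => r ^ (-s)) ‖x‖) ∂μ =
      ENNReal.ofReal
        (finrank ℝ E * μ.real (ball 0 1) * (R ^ ((finrank ℝ E : ℝ) - s) / (s - finrank ℝ E))) := by
  rw [← integral_indicator_Ici_rpow_norm μ hR hs, ofReal_integral_eq_lintegral_ofReal
    (integrable_indicator_Ici_rpow_norm μ hR hs)]
  exact .of_forall fun x => indicator_nonneg (fun r hr => rpow_nonneg (hR.le.trans hr) _) _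

end RadialTail

theorem norm_add_sq_le_mul {E : Type*} [SeminormedAddCommGroup E] (ℓ x : E) {s : ℝ}
    (hx : ‖x‖ ≤ s) : ‖ℓ + x‖ ^ 2 ≤ (1 + s ^ 2) * (1 + ‖ℓ‖ ^ 2) := by
  have h : ‖ℓ + x‖ ≤ ‖ℓ‖ + s := (norm_add_le _ _).trans (by linarith)
  -- Cauchy–Schwarz for `(1, ‖ℓ‖)` and `(s, 1)`
  nlinarith [norm_nonneg (ℓ + x), sq_nonneg (s * ‖ℓ‖ - 1)]

theorem one_add_sq_rpow_neg_le {a b c n : ℝ} (hb : 0 < b) (hn : 0 ≤ n)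
    (hab : b ^ 2 ≤ c * (1 + a ^ 2)) : (1 + a ^ 2) ^ (-n) ≤ c ^ n * b ^ (-(2 * n)) := by
  have hc : 0 < c := by nlinarith [sq_nonneg a, pow_pos hb 2]
  rw [show -(2 * n) = 2 * -n by ring, rpow_mul hb.le, rpow_two, rpow_neg (by positivity),
    rpow_neg (by positivity), ← inv_rpow (by positivity), ← inv_rpow (by positivity),
    ← mul_rpow hc.le (by positivity)]
  refine rpow_le_rpow (by positivity) ?_ hn
  rw [← div_eq_mul_inv, inv_eq_one_div, div_le_div_iff₀ (by positivity) (by positivity)]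
  linarith

theorem one_add_norm_sq_rpow_neg_le_indicator {E : Type*} [SeminormedAddCommGroup E] {ℓ x : E}
    {s lam n : ℝ} (hx : ‖x‖ ≤ s) (hs : s < lam) (hℓ : lam ≤ ‖ℓ‖) (hn : 0 ≤ n) :
    (1 + ‖ℓ‖ ^ 2) ^ (-n) ≤
      (1 + s ^ 2) ^ n * (Ici (lam - s)).indicator (fun r => r ^ (-(2 * n))) ‖ℓ + x‖ := by
  have hℓx : lam - s ≤ ‖ℓ + x‖ := by
    have := norm_sub_le (ℓ + x) x
    rw [add_sub_cancel_right] at this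
    linarith
  rw [indicator_of_mem (show ‖ℓ + x‖ ∈ Ici (lam - s) from hℓx)]
  exact one_add_sq_rpow_neg_le (by linarith) hn (norm_add_sq_le_mul ℓ x hx)

namespace OrthonormalBasis

variable {ι E : Type*} [Fintype ι] [NormedAddCommGroup E] [InnerProductSpace ℝ E]

theorem volume_fundamentalDomain [MeasurableSpace E] [BorelSpace E] [FiniteDimensional ℝ E]
    (b : OrthonormalBasis ι ℝ E) : volume (ZSpan.fundamentalDomain b.toBasis) = 1 := by
  rw [measure_congr (ZSpan.fundamentalDomain_ae_parallelepiped _ _), b.coe_toBasis,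
    b.volume_parallelepiped]

theorem norm_le_sqrt_card_of_mem_fundamentalDomain (b : OrthonormalBasis ι ℝ E) {x : E}
    (hx : x ∈ ZSpan.fundamentalDomain b.toBasis) : ‖x‖ ≤ √(Fintype.card ι) := by
  rw [← sqrt_sq (norm_nonneg x), ← b.sum_sq_inner_right]
  gcongr
  calc ∑ i, ⟪b i, x⟫ ^ 2 ≤ ∑ _i : ι, (1 : ℝ) := by
        refine Finset.sum_le_sum fun i _ => ?_
        have hi := hx i
        rw [b.coe_toBasis_repr_apply, b.repr_apply_apply] at hi
        nlinarith [hi.1, hi.2]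
    _ = Fintype.card ι := by simp

theorem znorm_equivFun {d : ℕ} (b : OrthonormalBasis (Fin d) ℝ E) (g : span ℤ (range b.toBasis)) :
    znorm ((b.toBasis.restrictScalars ℤ).equivFun g) = ‖(g : E)‖ := by
  rw [← sqrt_sq (norm_nonneg (g : E)), ← b.sum_sq_inner_right, znorm]
  congr 1
  refine Finset.sum_congr rfl fun i _ => ?_
  rw [Basis.equivFun_apply, ← eq_intCast (algebraMap ℤ ℝ), Basis.restrictScalars_repr_apply,
    b.coe_toBasis_repr_apply, b.repr_apply_apply]

theorem tsum_indicator_one_add_norm_sq_rpow_neg_le [MeasurableSpace E] [BorelSpace E]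
    [FiniteDimensional ℝ E] [Nonempty ι] (b : OrthonormalBasis ι ℝ E) {n lam : ℝ}
    (hn : (Fintype.card ι : ℝ) < 2 * n) (hlam : √(Fintype.card ι) < lam) :
    ∑' g : span ℤ (range b.toBasis), {g : span ℤ (range b.toBasis) | lam ≤ ‖(g : E)‖}.indicator
        (fun g => ENNReal.ofReal ((1 + ‖(g : E)‖ ^ 2) ^ (-n))) g ≤
      ENNReal.ofReal ((1 + Fintype.card ι) ^ n * (Fintype.card ι * volume.real (ball (0 : E) 1) *
        ((lam - √(Fintype.card ι)) ^ ((Fintype.card ι : ℝ) - 2 * n) /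
          (2 * n - Fintype.card ι)))) := by
  set L := span ℤ (range b.toBasis)
  set N := Fintype.card ι
  have hdim : finrank ℝ E = N := finrank_eq_card_basis b.toBasis
  have : Nontrivial E := Module.nontrivial_of_finrank_pos (by rw [hdim]; exact Fintype.card_pos)
  have : Countable L := Countable.of_equiv _ (b.toBasis.restrictScalars ℤ).equivFun.toEquiv.symm
  have hn0 : 0 ≤ n := by linarith [(Nat.cast_nonneg N : (0 : ℝ) ≤ N)]
  have key := (ZSpan.isAddFundamentalDomain' b.toBasis volume).tsum_mul_measure_le_lintegral
    (f := {g : L | lam ≤ ‖(g : E)‖}.indicator fun g => ENNReal.ofReal ((1 + ‖(g : E)‖ ^ 2) ^ (-n)))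
    (F := fun y => ENNReal.ofReal ((1 + N) ^ n) *
      ENNReal.ofReal ((Ici (lam - √N)).indicator (fun r => r ^ (-(2 * n))) ‖y‖)) ?_
  · rw [b.volume_fundamentalDomain, mul_one, lintegral_const_mul' _ _ ENNReal.ofReal_ne_top,
      lintegral_ofReal_indicator_Ici_rpow_norm volume (sub_pos.mpr hlam) (by rwa [hdim]), hdim,
      ← ENNReal.ofReal_mul (by positivity)] at key
    exact key
  intro g x hx
  by_cases hg : lam ≤ ‖(g : E)‖
  · rw [indicator_of_mem (show g ∈ {g : L | lam ≤ ‖(g : E)‖} from hg),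
      ← ENNReal.ofReal_mul (by positivity)]
    have hbound := one_add_norm_sq_rpow_neg_le_indicator
      (b.norm_le_sqrt_card_of_mem_fundamentalDomain hx) hlam hg hn0
    rw [sq_sqrt (Nat.cast_nonneg _)] at hbound
    exact ENNReal.ofReal_le_ofReal hbound
  · rw [indicator_of_notMem (show g ∉ {g : L | lam ≤ ‖(g : E)‖} from hg)]
    exact zero_le

end OrthonormalBasis

theorem EuclideanSpace.card_mul_volume_real_ball_one (ι : Type*) [Fintype ι] [Nonempty ι] :
    Fintype.card ι * volume.real (ball (0 : EuclideanSpace ℝ ι) 1) =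
      2 * π ^ ((Fintype.card ι : ℝ) / 2) / Gamma ((Fintype.card ι : ℝ) / 2) := by
  have hd : (0 : ℝ) < Fintype.card ι := Nat.cast_pos.mpr Fintype.card_pos
  rw [measureReal_def, EuclideanSpace.volume_ball, ENNReal.ofReal_one, one_pow, one_mul,
    ENNReal.toReal_ofReal (by positivity), Gamma_add_one (by positivity), sqrt_eq_rpow,
    ← rpow_natCast, ← rpow_mul pi_pos.le]
  field_simp

section IntegerLattice

variable {d : ℕ} {n lam : ℝ}

theorem abs_le_znorm (h : Fin d → ℤ) (i : Fin d) : |(h i : ℝ)| ≤ znorm h := by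
  rw [← sqrt_sq_eq_abs, znorm]
  exact sqrt_le_sqrt <|
    Finset.single_le_sum (f := fun i => (h i : ℝ) ^ 2) (fun _ _ => sq_nonneg _) (Finset.mem_univ i)

theorem finite_setOf_znorm_lt (c : ℝ) : {h : Fin d → ℤ | znorm h < c}.Finite := by
  refine (finite_Icc (fun _ => -⌈c⌉) fun _ => ⌈c⌉).subset fun h hh => ?_
  have hbound (i : Fin d) : |h i| < ⌈c⌉ := by
    exact_mod_cast (abs_le_znorm h i).trans_lt (hh.trans_le (Int.le_ceil c))
  exact ⟨fun i => (abs_lt.mp (hbound i)).1.le, fun i => (abs_lt.mp (hbound i)).2.le⟩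

/-- The correction term `δ𝒮_n(λ)`. -/
noncomputable def latticeTailBound (d : ℕ) (n lam : ℝ) : ℝ :=
  ((1 : ℝ) + d) ^ n / (2 ^ (d - 1) * π ^ ((d : ℝ) / 2) * Gamma ((d : ℝ) / 2) * (2 * n - d) *
    (lam - √d) ^ (2 * n - (d : ℝ)))

theorem latticeTailBound_pos (hd : 0 < d) (hn : (d : ℝ) / 2 < n) (hlam : √d < lam) :
    0 < latticeTailBound d n lam := by
  have : 0 < 2 * n - d := by linarith
  have : 0 < Gamma ((d : ℝ) / 2) := Gamma_pos_of_pos (by positivity)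
  have : 0 < lam - √d := sub_pos.mpr hlam
  unfold latticeTailBound
  positivity

theorem two_mul_pi_pow_mul_latticeTailBound (hd : 0 < d) (hlam : √d < lam) :
    (2 * π) ^ d * latticeTailBound d n lam =
      (1 + d) ^ n * (d * volume.real (ball (0 : EuclideanSpace ℝ (Fin d)) 1) *
        ((lam - √d) ^ ((d : ℝ) - 2 * n) / (2 * n - d))) := by
  have : Nonempty (Fin d) := ⟨⟨0, hd⟩⟩
  have hpi : π ^ d = π ^ ((d : ℝ) / 2) * π ^ ((d : ℝ) / 2) := by
    rw [← rpow_add pi_pos, add_halves, rpow_natCast]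
  have htwo : (2 : ℝ) ^ d = 2 ^ (d - 1) * 2 := by
    rw [← pow_succ, Nat.sub_add_cancel hd]
  have hball := EuclideanSpace.card_mul_volume_real_ball_one (Fin d)
  rw [Fintype.card_fin] at hball
  rw [hball, latticeTailBound, mul_pow, hpi, htwo,
    show (d : ℝ) - 2 * n = -(2 * n - d) by ring, rpow_neg (sub_pos.mpr hlam).le]
  field_simp

theorem tsum_ofReal_one_add_znorm_sq_rpow_neg_tail_le (hd : 0 < d) (hn : (d : ℝ) / 2 < n)
    (hlam : √d < lam) :
    ∑' h : ({h : Fin d → ℤ | lam ≤ znorm h} : Set _), ENNReal.ofReal ((1 + znorm h.1 ^ 2) ^ (-n)) ≤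
      ENNReal.ofReal ((2 * π) ^ d * latticeTailBound d n lam) := by
  have : Nonempty (Fin d) := ⟨⟨0, hd⟩⟩
  let b := EuclideanSpace.basisFun (Fin d) ℝ
  have hb := b.tsum_indicator_one_add_norm_sq_rpow_neg_le (n := n) (lam := lam)
    (by rw [Fintype.card_fin]; linarith) (by rwa [Fintype.card_fin])
  rw [Fintype.card_fin, ← two_mul_pi_pow_mul_latticeTailBound hd hlam] at hb
  rw [tsum_subtype {h : Fin d → ℤ | lam ≤ znorm h}
      fun h => ENNReal.ofReal ((1 + znorm h ^ 2) ^ (-n)),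
    ← (b.toBasis.restrictScalars ℤ).equivFun.toEquiv.tsum_eq]
  simpa only [LinearEquiv.coe_toEquiv, indicator_apply, mem_ofPred_eq, b.znorm_equivFun] using hb

theorem summable_one_add_znorm_sq_rpow_neg_tail (hd : 0 < d) (hn : (d : ℝ) / 2 < n)
    (hlam : √d < lam) :
    Summable fun h : ({h : Fin d → ℤ | lam ≤ znorm h} : Set _) => (1 + znorm h.1 ^ 2) ^ (-n) := by
  refine (ENNReal.summable_toReal (ne_top_of_le_ne_top ENNReal.ofReal_ne_top
    (tsum_ofReal_one_add_znorm_sq_rpow_neg_tail_le hd hn hlam))).congr fun h => ?_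
  exact ENNReal.toReal_ofReal (by positivity)

theorem tsum_one_add_znorm_sq_rpow_neg_tail_le (hd : 0 < d) (hn : (d : ℝ) / 2 < n)
    (hlam : √d < lam) :
    ∑' h : ({h : Fin d → ℤ | lam ≤ znorm h} : Set _), (1 + znorm h.1 ^ 2) ^ (-n) ≤
      (2 * π) ^ d * latticeTailBound d n lam := by
  rw [← ENNReal.ofReal_le_ofReal_iff (by have := latticeTailBound_pos hd hn hlam; positivity),
    ENNReal.ofReal_tsum_of_nonneg (fun _ => by positivity)
      (summable_one_add_znorm_sq_rpow_neg_tail hd hn hlam)]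
  exact tsum_ofReal_one_add_znorm_sq_rpow_neg_tail_le hd hn hlam

theorem summable_one_add_znorm_sq_rpow_neg (hd : 0 < d) (hn : (d : ℝ) / 2 < n) :
    Summable fun h : Fin d → ℤ => (1 + znorm h ^ 2) ^ (-n) := by
  have hlam : √d < √d + 1 := lt_add_one _
  have : Finite ({h : Fin d → ℤ | √d + 1 ≤ znorm h}ᶜ : Set _) := by
    refine ((finite_setOf_znorm_lt (√d + 1)).subset fun h hh => ?_).to_subtype
    exact not_le.mp (show ¬ √d + 1 ≤ znorm h from hh)
  exact summable_subtype_and_compl.mp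
    ⟨summable_one_add_znorm_sq_rpow_neg_tail hd hn hlam, .of_finite⟩

theorem tsum_one_add_znorm_sq_rpow_neg_tail_pos (hd : 0 < d) (hn : (d : ℝ) / 2 < n) (lam : ℝ) :
    0 < ∑' h : ({h : Fin d → ℤ | lam ≤ znorm h} : Set _), (1 + znorm h.1 ^ 2) ^ (-n) := by
  have : Nonempty (Fin d) := ⟨⟨0, hd⟩⟩
  obtain ⟨h, hh⟩ := (finite_setOf_znorm_lt (d := d) lam).infinite_compl.nonempty
  exact ((summable_one_add_znorm_sq_rpow_neg hd hn).subtype _).tsum_pos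
    (fun _ => rpow_nonneg (by positivity) _) ⟨h, by simpa using hh⟩
    (rpow_pos_of_pos (by positivity) _)

end IntegerLattice

/-- Finiteness and two-sided cutoff estimates for `Σ_n = (2π)^{−d} ∑_{h∈ℤ^d} (1+|h|²)^{−n}`:
the series converges, and for every cutoff `λ ≥ 2√d` one has
`𝒮_n(λ) < Σ_n ≤ 𝒮_n(λ) + δ𝒮_n(λ)`. -/
theorem stmt_18 (d : ℕ) (hd : 2 ≤ d) (n : ℝ) (hn : (d : ℝ) / 2 < n) :
    Summable (fun h : Fin d → ℤ => (1 + znorm h ^ 2) ^ (-n)) ∧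
    ∀ lam : ℝ, 2 * Real.sqrt d ≤ lam →
      (∑' h : {h : Fin d → ℤ // znorm h < lam}, (1 + znorm h.1 ^ 2) ^ (-n)) /
          (2 * Real.pi) ^ d <
        (∑' h : Fin d → ℤ, (1 + znorm h ^ 2) ^ (-n)) / (2 * Real.pi) ^ d ∧
      (∑' h : Fin d → ℤ, (1 + znorm h ^ 2) ^ (-n)) / (2 * Real.pi) ^ d ≤
        (∑' h : {h : Fin d → ℤ // znorm h < lam}, (1 + znorm h.1 ^ 2) ^ (-n)) /
            (2 * Real.pi) ^ d +
          ((1 : ℝ) + d) ^ n /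
            (2 ^ (d - 1) * Real.pi ^ ((d : ℝ) / 2) * Real.Gamma ((d : ℝ) / 2) *
              (2 * n - d) * (lam - Real.sqrt d) ^ (2 * n - (d : ℝ))) := by
  have hd0 : 0 < d := by omega
  have hsum := summable_one_add_znorm_sq_rpow_neg hd0 hn
  refine ⟨hsum, fun lam hlam => ?_⟩
  have hlam' : √d < lam := by
    have : 0 < √(d : ℝ) := Real.sqrt_pos.mpr (by exact_mod_cast hd0)
    linarith
  have hsplit := hsum.tsum_subtype_add_tsum_subtype_compl {h : Fin d → ℤ | znorm h < lam}
  rw [show {h : Fin d → ℤ | znorm h < lam}ᶜ = {h | lam ≤ znorm h} by ext; simp] at hsplit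
  have hpi : 0 < (2 * π) ^ d := by positivity
  rw [← hsplit, add_div]
  refine ⟨lt_add_of_pos_right _ (div_pos (tsum_one_add_znorm_sq_rpow_neg_tail_pos hd0 hn lam) hpi),
    add_le_add_right ?_ _⟩
  rw [div_le_iff₀' hpi]
  exact tsum_one_add_znorm_sq_rpow_neg_tail_le hd0 hn hlam'
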